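/- arXiv:2403.17944 — 5 statements merged into one kernel-verified Lean document; each statement's English description precedes it below -/
import Mathlib

section
/- Let X be a Dedekind complete f-algebra with unit e in which every positive weak order unit of a band is invertible in that band, and for x ∈ X_+ let x* denote the inverse of x in the band generated by x (so x·x* = P_x e, the component of e in the band of x). Then for x, y ∈ X_+: (i) if x ⊥ y then x* ⊥ y* and (x+y)* = x* + y*; (ii) (x·y)* = x*·y*; (iii) (x^p)* = (x*)^p for natural p ≥ 1; (iv) if 0 ≤ x ≤ y and P is a band projection with P ≤ P_x, then P y* ≤ P x*. -/
/-- Basic properties of the partial inverse (star map) in a universally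
complete `f`-algebra with unit `1`.  Here `comp x` is the component `P_x 1` of
the unit in the band generated by `x ≥ 0` (the supremum of `1 ⊓ n • x`), and
`pinv x` is the partial inverse of `x`: the positive element of the band
generated by `x` with `x * pinv x = comp x`.  Then for `x, y ≥ 0`:
(i) `x ⊥ y → pinv x ⊥ pinv y ∧ pinv (x+y) = pinv x + pinv y`;
(ii) `pinv (x*y) = pinv x * pinv y`;
(iii) `pinv (x^p) = (pinv x)^p` for `p ≥ 1`;
(iv) if `x ≤ y` and `q` is a component of the unit with `q ≤ comp x` (a band
projection `P ≤ P_x`), then `q * pinv y ≤ q * pinv x`. -/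
theorem partial_inverse_properties {X : Type*} [ConditionallyCompleteLattice X]
    [CommRing X] [CovariantClass X X (· + ·) (· ≤ ·)]
    (hmul : ∀ a b : X, 0 ≤ a → 0 ≤ b → 0 ≤ a * b)
    (hfa : ∀ a b c : X, a ⊓ b = 0 → 0 ≤ c → (c * a) ⊓ b = 0)
    (comp : X → X)
    (hcomp : ∀ x : X, 0 ≤ x → IsLUB (Set.range fun n : ℕ => 1 ⊓ (n • x)) (comp x))
    (pinv : X → X)
    (hpinv : ∀ x : X, 0 ≤ x → 0 ≤ pinv x ∧
      (∀ y : X, 0 ≤ y → x ⊓ y = 0 → pinv x ⊓ y = 0) ∧ x * pinv x = comp x)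
    (x y : X) (hx : 0 ≤ x) (hy : 0 ≤ y) :
    (x ⊓ y = 0 → pinv x ⊓ pinv y = 0 ∧ pinv (x + y) = pinv x + pinv y) ∧
    pinv (x * y) = pinv x * pinv y ∧
    (∀ p : ℕ, 1 ≤ p → pinv (x ^ p) = (pinv x) ^ p) ∧
    (∀ q : X, 0 ≤ q → q * q = q → q ≤ comp x → x ≤ y → q * pinv y ≤ q * pinv x) := by
  -- 0 ≤ 1
  have h01 : (0:X) ≤ 1 := by
    have h0 := hcomp 0 le_rfl
    have hmem : (1:X) ⊓ ((0:ℕ) • (0:X)) ∈ Set.range fun n : ℕ => 1 ⊓ (n • (0:X)) := ⟨0, rfl⟩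
    have hub : (1:X) ⊓ 0 ∈ upperBounds (Set.range fun n : ℕ => 1 ⊓ (n • (0:X))) := by
      rintro _ ⟨n, rfl⟩; simp
    have hc0 : comp 0 = (1:X) ⊓ 0 := le_antisymm (h0.2 hub) (by simpa using h0.1 hmem)
    have h2 := (hpinv 0 le_rfl).2.2
    rw [zero_mul] at h2
    have : (1:X) ⊓ 0 = 0 := by rw [← hc0, ← h2]
    exact inf_eq_right.mp this
  -- product of disjoint nonnegatives is zero
  have hmul0 : ∀ a b : X, 0 ≤ a → 0 ≤ b → a ⊓ b = 0 → a * b = 0 := by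
    intro a b ha hb hab
    have h1 : (a * b) ⊓ a = 0 := hfa b a a (by rwa [inf_comm]) ha
    have h2 : (b * a) ⊓ (a * b) = 0 := hfa a (a * b) b (by rwa [inf_comm]) hb
    rw [mul_comm b a, inf_idem] at h2
    exact h2
  -- multiplication by nonnegative is monotone
  have hmono : ∀ c a b : X, 0 ≤ c → a ≤ b → c * a ≤ c * b := by
    intro c a b hc hab
    have h := hmul c (b - a) hc (sub_nonneg.mpr hab)
    have h2 : 0 ≤ c * b - c * a := by
      calc (0:X) ≤ c * (b - a) := h
        _ = c * b - c * a := by ring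
    exact sub_nonneg.mp h2
  -- comp basic facts
  have hcomp_ub : ∀ w : X, 0 ≤ w → ∀ n : ℕ, 1 ⊓ (n • w) ≤ comp w := by
    intro w hw n; exact (hcomp w hw).1 ⟨n, rfl⟩
  have hcomp_nonneg : ∀ w : X, 0 ≤ w → 0 ≤ comp w := by
    intro w hw
    have := hcomp_ub w hw 0
    simpa [inf_eq_right.mpr h01] using this
  have hcomp_le_one : ∀ w : X, 0 ≤ w → comp w ≤ 1 := by
    intro w hw
    exact (hcomp w hw).2 (by rintro _ ⟨n, rfl⟩; exact inf_le_left)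
  have hcomp_mono : ∀ w v : X, 0 ≤ w → w ≤ v → comp w ≤ comp v := by
    intro w v hw hwv
    refine (hcomp w hw).2 ?_
    rintro _ ⟨n, rfl⟩
    exact le_trans (inf_le_inf_left 1 (nsmul_le_nsmul_right hwv n)) (hcomp_ub v (hw.trans hwv) n)
  -- subadditivity of ⊓ with nonnegative entries
  have hinf_subadd : ∀ a b z : X, 0 ≤ a → 0 ≤ b → 0 ≤ z →
      (a + b) ⊓ z ≤ a ⊓ z + b ⊓ z := by
    intro a b z ha hb hz
    have key : a ⊓ z + b ⊓ z = ((a + b) ⊓ (z + b)) ⊓ ((a + z) ⊓ (z + z)) := by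
      calc a ⊓ z + b ⊓ z = ((a ⊓ z) + b) ⊓ ((a ⊓ z) + z) := add_inf b z (a ⊓ z)
        _ = ((a + b) ⊓ (z + b)) ⊓ ((a + z) ⊓ (z + z)) := by rw [inf_add a z b, inf_add a z z]
    rw [key]
    have h2 : (a + b) ⊓ z ≤ z := inf_le_right
    refine le_inf (le_inf inf_le_left ?_) (le_inf ?_ ?_)
    · exact h2.trans (le_add_of_nonneg_right hb)
    · exact h2.trans (le_add_of_nonneg_left ha)
    · exact h2.trans (le_add_of_nonneg_left hz)
  have hdisj_add : ∀ a b z : X, 0 ≤ a → 0 ≤ b → 0 ≤ z → a ⊓ z = 0 → b ⊓ z = 0 →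
      (a + b) ⊓ z = 0 := by
    intro a b z ha hb hz h1 h2
    refine le_antisymm ?_ (le_inf (add_nonneg ha hb) hz)
    calc (a + b) ⊓ z ≤ a ⊓ z + b ⊓ z := hinf_subadd a b z ha hb hz
      _ = 0 := by rw [h1, h2, add_zero]
  have hsmul_disj : ∀ (n : ℕ) (a z : X), 0 ≤ a → 0 ≤ z → a ⊓ z = 0 → (n • a) ⊓ z = 0 := by
    intro n a z ha hz h
    induction n with
    | zero => simpa [inf_comm] using inf_eq_left.mpr hz
    | succ k ih =>
        rw [succ_nsmul]
        exact hdisj_add _ _ _ (nsmul_nonneg ha k) ha hz ih h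
  -- comp w is in the band of w
  have hcomp_band : ∀ w z : X, 0 ≤ w → 0 ≤ z → w ⊓ z = 0 → comp w ⊓ z = 0 := by
    intro w z hw hz hwz
    set s := comp w with hs
    have hf0 : ∀ n : ℕ, (1 ⊓ (n • w)) ⊓ z = 0 := by
      intro n
      refine le_antisymm ?_ (le_inf (le_inf h01 (nsmul_nonneg hw n)) hz)
      calc (1 ⊓ (n • w)) ⊓ z ≤ (n • w) ⊓ z := inf_le_inf_right z inf_le_right
        _ = 0 := hsmul_disj n w z hw hz hwz
    have hkey : ∀ n : ℕ, 1 ⊓ (n • w) ≤ s - s ⊓ z := by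
      intro n
      set f := (1:X) ⊓ (n • w) with hfdef
      have hfs : f ≤ s := hcomp_ub w hw n
      have hd : 0 ≤ s - f := sub_nonneg.mpr hfs
      have h1 : s ⊓ z ≤ (f + (s - f)) ⊓ (z + (s - f)) := by
        refine le_inf ?_ ?_
        · have : f + (s - f) = s := by ring
          rw [this]; exact inf_le_left
        · exact inf_le_right.trans (le_add_of_nonneg_right hd)
      have h2 : (f + (s - f)) ⊓ (z + (s - f)) = f ⊓ z + (s - f) := by
        rw [add_comm f (s - f), add_comm z (s - f), ← add_inf f z (s - f), add_comm]
      rw [h2, hf0 n, zero_add] at h1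
      -- h1 : s ⊓ z ≤ s - f, want f ≤ s - s ⊓ z
      refine le_sub_iff_add_le.mpr ?_
      rw [add_comm]
      exact le_sub_iff_add_le.mp h1
    have hub : s - s ⊓ z ∈ upperBounds (Set.range fun n : ℕ => 1 ⊓ (n • w)) := by
      rintro _ ⟨n, rfl⟩; exact hkey n
    have hle : s ≤ s - s ⊓ z := (hcomp w hw).2 hub
    have hle0 : s ⊓ z ≤ 0 := by
      have h5 : s + s ⊓ z ≤ s := le_sub_iff_add_le.mp hle
      exact (add_le_iff_nonpos_right s).mp h5
    exact le_antisymm hle0 (le_inf (hcomp_nonneg w hw) hz)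
  -- w is disjoint from 1 - comp w
  have hx_comp_disj : ∀ w : X, 0 ≤ w → w ⊓ (1 - comp w) = 0 := by
    intro w hw
    set c := w ⊓ (1 - comp w) with hcdef
    have hc0 : 0 ≤ c := le_inf hw (sub_nonneg.mpr (hcomp_le_one w hw))
    have hkey : ∀ n : ℕ, 1 ⊓ (n • w) ≤ comp w - c := by
      intro n
      have h1 : 1 ⊓ (n • w) + c ≤ 1 := by
        have hc1 : c ≤ 1 - comp w := inf_le_right
        have hc2 : (1:X) - comp w ≤ 1 - (1 ⊓ (n • w)) :=
          sub_le_sub_left (hcomp_ub w hw n) 1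
        calc 1 ⊓ (n • w) + c ≤ 1 ⊓ (n • w) + (1 - (1 ⊓ (n • w))) := by
              exact add_le_add_right (hc1.trans hc2) _
          _ = 1 := by ring
      have h2 : 1 ⊓ (n • w) + c ≤ (n + 1) • w := by
        have : 1 ⊓ (n • w) + c ≤ n • w + w :=
          add_le_add inf_le_right (inf_le_left : c ≤ w)
        rwa [← succ_nsmul w n] at this
      have h3 : 1 ⊓ (n • w) + c ≤ 1 ⊓ ((n + 1) • w) := le_inf h1 h2
      have h4 : 1 ⊓ (n • w) + c ≤ comp w := h3.trans (hcomp_ub w hw (n + 1))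
      exact le_sub_iff_add_le.mpr h4
    have hle : comp w ≤ comp w - c :=
      (hcomp w hw).2 (by rintro _ ⟨n, rfl⟩; exact hkey n)
    have : c ≤ 0 := by
      have h5 : comp w + c ≤ comp w := le_sub_iff_add_le.mp hle
      exact (add_le_iff_nonpos_right (comp w)).mp h5
    exact le_antisymm this hc0
  -- multiplication by comp w fixes elements of the band of w
  have hmul_comp : ∀ w a : X, 0 ≤ w → 0 ≤ a → a ⊓ (1 - comp w) = 0 → a * comp w = a := by
    intro w a hw ha hdis
    have h0 : a * (1 - comp w) = 0 :=
      hmul0 a _ ha (sub_nonneg.mpr (hcomp_le_one w hw)) hdis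
    have h1 : a - a * comp w = 0 := by rw [← h0]; ring
    have := sub_eq_zero.mp h1
    exact this.symm
  have hpinv_comp : ∀ w : X, 0 ≤ w → pinv w * comp w = pinv w := by
    intro w hw
    refine hmul_comp w (pinv w) hw (hpinv w hw).1 ?_
    exact (hpinv w hw).2.1 _ (sub_nonneg.mpr (hcomp_le_one w hw)) (hx_comp_disj w hw)
  -- uniqueness of the partial inverse
  have hU : ∀ w a : X, 0 ≤ w → 0 ≤ a → a * comp w = a → w * a = comp w → a = pinv w := by
    intro w a hw ha h1 h2
    calc a = a * comp w := h1.symm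
      _ = a * (w * pinv w) := by rw [(hpinv w hw).2.2]
      _ = (w * a) * pinv w := by ring
      _ = comp w * pinv w := by rw [h2]
      _ = pinv w := by rw [mul_comm]; exact hpinv_comp w hw
  -- general multiplicativity of pinv
  have hmul_pinv : ∀ a b : X, 0 ≤ a → 0 ≤ b → pinv (a * b) = pinv a * pinv b := by
    intro a b ha hb
    have hab : 0 ≤ a * b := hmul a b ha hb
    have hpa := hpinv a ha
    have hpb := hpinv b hb
    have hpab := hpinv (a * b) hab
    -- (B) : pinv (a*b) is fixed by comp a and comp b
    have hBa : pinv (a * b) * comp a = pinv (a * b) := by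
      refine hmul_comp a _ ha hpab.1 ?_
      refine hpab.2.1 _ (sub_nonneg.mpr (hcomp_le_one a ha)) ?_
      have := hfa a (1 - comp a) b (hx_comp_disj a ha) hb
      rwa [mul_comm b a] at this
    have hBb : pinv (a * b) * comp b = pinv (a * b) := by
      refine hmul_comp b _ hb hpab.1 ?_
      refine hpab.2.1 _ (sub_nonneg.mpr (hcomp_le_one b hb)) ?_
      exact hfa b (1 - comp b) a (hx_comp_disj b hb) ha
    -- (A) : pinv a * pinv b is fixed by comp (a*b)
    have hApp : 0 ≤ pinv a * pinv b := hmul _ _ hpa.1 hpb.1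
    have hA : (pinv a * pinv b) * comp (a * b) = pinv a * pinv b := by
      set z := 1 - comp (a * b) with hzdef
      have hz0 : 0 ≤ z := sub_nonneg.mpr (hcomp_le_one _ hab)
      have hzab : (a * b) ⊓ z = 0 := hx_comp_disj _ hab
      set u := z ⊓ (pinv a * pinv b) with hudef
      have hu0 : 0 ≤ u := le_inf hz0 hApp
      have huab : (a * b) ⊓ u = 0 := by
        refine le_antisymm ?_ (le_inf hab hu0)
        calc (a * b) ⊓ u ≤ (a * b) ⊓ z := inf_le_inf_left _ inf_le_left
          _ = 0 := hzab
      have hmu : (a * b) * u = 0 := hmul0 _ _ hab hu0 huab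
      have hua : u * comp a = u := by
        refine hmul_comp a u ha hu0 ?_
        have h1 : pinv a ⊓ (1 - comp a) = 0 :=
          hpa.2.1 _ (sub_nonneg.mpr (hcomp_le_one a ha)) (hx_comp_disj a ha)
        have h2 : (pinv b * pinv a) ⊓ (1 - comp a) = 0 := hfa _ _ _ h1 hpb.1
        rw [mul_comm (pinv b) (pinv a)] at h2
        refine le_antisymm ?_ (le_inf hu0 (sub_nonneg.mpr (hcomp_le_one a ha)))
        calc u ⊓ (1 - comp a) ≤ (pinv a * pinv b) ⊓ (1 - comp a) :=
              inf_le_inf_right _ inf_le_right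
          _ = 0 := h2
      have hub' : u * comp b = u := by
        refine hmul_comp b u hb hu0 ?_
        have h1 : pinv b ⊓ (1 - comp b) = 0 :=
          hpb.2.1 _ (sub_nonneg.mpr (hcomp_le_one b hb)) (hx_comp_disj b hb)
        have h2 : (pinv a * pinv b) ⊓ (1 - comp b) = 0 := hfa _ _ _ h1 hpa.1
        refine le_antisymm ?_ (le_inf hu0 (sub_nonneg.mpr (hcomp_le_one b hb)))
        calc u ⊓ (1 - comp b) ≤ (pinv a * pinv b) ⊓ (1 - comp b) :=
              inf_le_inf_right _ inf_le_right
          _ = 0 := h2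
      have hu_zero : u = 0 := by
        calc u = u * comp a * comp b := by rw [hua, hub']
          _ = u * (a * pinv a) * (b * pinv b) := by rw [hpa.2.2, hpb.2.2]
          _ = ((a * b) * u) * (pinv a * pinv b) := by ring
          _ = 0 := by rw [hmu, zero_mul]
      have : (pinv a * pinv b) ⊓ z = 0 := by
        rw [inf_comm, ← hudef, hu_zero]
      exact hmul_comp _ _ hab hApp this
    -- comp (a*b) = comp a * comp b
    have hc2 : (a * b) * (pinv a * pinv b) = comp a * comp b := by
      calc (a * b) * (pinv a * pinv b) = (a * pinv a) * (b * pinv b) := by ring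
        _ = comp a * comp b := by rw [hpa.2.2, hpb.2.2]
    have hc1c2 : comp (a * b) * (comp a * comp b) = comp (a * b) := by
      calc comp (a * b) * (comp a * comp b)
          = (a * b) * (pinv (a * b) * comp a * comp b) := by
            rw [← hpab.2.2]; ring
        _ = (a * b) * pinv (a * b) := by rw [hBa, hBb]
        _ = comp (a * b) := hpab.2.2
    have hc2c1 : (comp a * comp b) * comp (a * b) = comp a * comp b := by
      calc (comp a * comp b) * comp (a * b)
          = (a * b) * ((pinv a * pinv b) * comp (a * b)) := by rw [← hc2]; ring
        _ = (a * b) * (pinv a * pinv b) := by rw [hA]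
        _ = comp a * comp b := hc2
    have hceq : comp (a * b) = comp a * comp b := by
      calc comp (a * b) = comp (a * b) * (comp a * comp b) := hc1c2.symm
        _ = (comp a * comp b) * comp (a * b) := by ring
        _ = comp a * comp b := hc2c1
    exact (hU (a * b) (pinv a * pinv b) hab hApp hA (by rw [hc2, hceq])).symm
  refine ⟨?_, hmul_pinv x y hx hy, ?_, ?_⟩
  · -- part (i)
    intro hxy
    have hpx := hpinv x hx
    have hpy := hpinv y hy
    have d1 : pinv x ⊓ y = 0 := hpx.2.1 y hy hxy
    have d2 : pinv y ⊓ x = 0 := hpy.2.1 x hx (by rwa [inf_comm])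
    have goal1 : pinv x ⊓ pinv y = 0 := by
      have := hpy.2.1 (pinv x) hpx.1 (by rwa [inf_comm] at d1)
      rwa [inf_comm] at this
    refine ⟨goal1, ?_⟩
    -- comp (x+y) = comp x + comp y
    have hxy0 : 0 ≤ x + y := add_nonneg hx hy
    have hle : comp (x + y) ≤ comp x + comp y := by
      refine (hcomp (x + y) hxy0).2 ?_
      rintro _ ⟨n, rfl⟩
      show (1:X) ⊓ (n • (x + y)) ≤ comp x + comp y
      have h1 : 1 ⊓ (n • (x + y)) = (n • x + n • y) ⊓ 1 := by
        rw [smul_add, inf_comm]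
      rw [h1]
      calc (n • x + n • y) ⊓ 1 ≤ (n • x) ⊓ 1 + (n • y) ⊓ 1 :=
            hinf_subadd _ _ _ (nsmul_nonneg hx n) (nsmul_nonneg hy n) h01
        _ ≤ comp x + comp y := by
            refine add_le_add ?_ ?_
            · rw [inf_comm]; exact hcomp_ub x hx n
            · rw [inf_comm]; exact hcomp_ub y hy n
    have hcx : comp x ≤ comp (x + y) :=
      hcomp_mono x (x + y) hx (le_add_of_nonneg_right hy)
    have hcy : comp y ≤ comp (x + y) :=
      hcomp_mono y (x + y) hy (le_add_of_nonneg_left hx)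
    have hdisjc : comp x ⊓ comp y = 0 := by
      have h1 : comp y ⊓ x = 0 := hcomp_band y x hy hx (by rwa [inf_comm])
      have h2 : comp x ⊓ comp y = 0 :=
        hcomp_band x (comp y) hx (hcomp_nonneg y hy) (by rwa [inf_comm] at h1)
      exact h2
    have hge : comp x + comp y ≤ comp (x + y) := by
      have hsup : comp x ⊔ comp y ≤ comp (x + y) := sup_le hcx hcy
      have : comp x ⊓ comp y + (comp x ⊔ comp y) = comp x + comp y := inf_add_sup _ _
      rw [hdisjc, zero_add] at this
      rwa [← this]
    have hcadd : comp (x + y) = comp x + comp y := le_antisymm hle hge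
    -- apply uniqueness
    have hpxcy : pinv x * comp y = 0 := by
      have h1 : comp y ⊓ pinv x = 0 :=
        hcomp_band y (pinv x) hy hpx.1 (by rwa [inf_comm] at d1)
      exact hmul0 _ _ hpx.1 (hcomp_nonneg y hy) (by rwa [inf_comm])
    have hpycx : pinv y * comp x = 0 := by
      have h1 : comp x ⊓ pinv y = 0 :=
        hcomp_band x (pinv y) hx hpy.1 (by rwa [inf_comm] at d2)
      exact hmul0 _ _ hpy.1 (hcomp_nonneg x hx) (by rwa [inf_comm])
    have hxpy : x * pinv y = 0 := hmul0 _ _ hx hpy.1 (by rwa [inf_comm] at d2)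
    have hypx : y * pinv x = 0 := hmul0 _ _ hy hpx.1 (by rwa [inf_comm] at d1)
    refine (hU (x + y) (pinv x + pinv y) hxy0 (add_nonneg hpx.1 hpy.1) ?_ ?_).symm
    · rw [hcadd]
      have expand : (pinv x + pinv y) * (comp x + comp y) =
          pinv x * comp x + pinv x * comp y + pinv y * comp x + pinv y * comp y := by ring
      rw [expand, hpinv_comp x hx, hpinv_comp y hy, hpxcy, hpycx]
      ring
    · have expand : (x + y) * (pinv x + pinv y) =
          x * pinv x + x * pinv y + y * pinv x + y * pinv y := by ring
      rw [expand, hpx.2.2, hpy.2.2, hxpy, hypx, hcadd]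
      ring
  · -- part (iii)
    intro p hp
    induction p, hp using Nat.le_induction with
    | base => rw [pow_one, pow_one]
    | succ n hn ih =>
        have hxn : 0 ≤ x ^ n := by
          clear ih hn
          induction n with
          | zero => simpa using h01
          | succ k ih2 => rw [pow_succ]; exact hmul _ _ ih2 hx
        rw [pow_succ, pow_succ, hmul_pinv (x ^ n) x hxn hx, ih]
  · -- part (iv)
    intro q hq0 hqq hqcx hxy2
    have hcxy : comp x ≤ comp y := hcomp_mono x y hx hxy2
    have hq_fix : ∀ c : X, c ≤ 1 → q ≤ c → q * c = q := by
      intro c hc1 hqc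
      have h1 : 0 ≤ q * (1 - c) := hmul q _ hq0 (sub_nonneg.mpr hc1)
      have h2 : q * (1 - c) ≤ q * (1 - q) := hmono q _ _ hq0 (sub_le_sub_left hqc 1)
      have h3 : q * (1 - q) = 0 := by
        have : q * (1 - q) = q - q * q := by ring
        rw [this, hqq]; ring
      have h4 : q * (1 - c) = 0 := le_antisymm (h3 ▸ h2) h1
      have h5 : q - q * c = 0 := by rw [← h4]; ring
      exact sub_eq_zero.mp h5 |>.symm
    have hq_cx : q * comp x = q := hq_fix _ (hcomp_le_one x hx) hqcx
    have hq_cy : q * comp y = q := hq_fix _ (hcomp_le_one y hy) (hqcx.trans hcxy)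
    have hpx := hpinv x hx
    have hpy := hpinv y hy
    have hApp : 0 ≤ pinv x * pinv y := hmul _ _ hpx.1 hpy.1
    have hkey : comp x * pinv y ≤ comp y * pinv x := by
      have h := hmono (pinv x * pinv y) x y hApp hxy2
      have e1 : pinv x * pinv y * x = comp x * pinv y := by
        rw [show pinv x * pinv y * x = (x * pinv x) * pinv y from by ring, hpx.2.2]
      have e2 : pinv x * pinv y * y = comp y * pinv x := by
        rw [show pinv x * pinv y * y = (y * pinv y) * pinv x from by ring, hpy.2.2]
      rwa [e1, e2] at h
    have h := hmono q _ _ hq0 hkey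
    have e3 : q * (comp x * pinv y) = q * pinv y := by
      rw [← mul_assoc, hq_cx]
    have e4 : q * (comp y * pinv x) = q * pinv x := by
      rw [← mul_assoc, hq_cy]
    rwa [e3, e4] at h
end

section
/- Let X be a universally complete f-algebra with unit e and let (x_α), (y_α) be order bounded nets in X_+. Then liminf x_α · liminf y_α ≤ liminf (x_α y_α) ≤ liminf x_α · limsup y_α ≤ limsup (x_α y_α) ≤ limsup x_α · limsup y_α. -/
section LiminfLimsupMulAux
variable {X : Type*} [ConditionallyCompleteLattice X] [CommRing X]
  [CovariantClass X X (· + ·) (· ≤ ·)]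

private lemma llmc_mul_mono (hmul : ∀ a b : X, 0 ≤ a → 0 ≤ b → 0 ≤ a * b)
    {c a b : X} (hc : 0 ≤ c) (hab : a ≤ b) : c * a ≤ c * b := by
  have h := hmul c (b - a) hc (sub_nonneg.mpr hab)
  have h2 := add_le_add_right h (c * a)
  calc c * a = c * a + 0 := by ring
    _ ≤ c * a + c * (b - a) := h2
    _ = c * b := by ring

private lemma llmc_arch {w u : X} (h : ∀ n : ℕ, n • w ≤ u) : w ≤ 0 := by
  have hbdd : BddAbove (Set.range fun n : ℕ => n • w) := ⟨u, by rintro _ ⟨n, rfl⟩; exact h n⟩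
  have h1 : ∀ n : ℕ, n • w ≤ (⨆ n : ℕ, n • w) - w := by
    intro n
    have h2 : (n + 1) • w ≤ ⨆ n : ℕ, n • w := le_ciSup hbdd (n + 1)
    rw [succ_nsmul] at h2
    exact le_sub_iff_add_le.mpr h2
  have h3 : (⨆ n : ℕ, n • w) ≤ (⨆ n : ℕ, n • w) - w := ciSup_le h1
  have h4 := le_sub_iff_add_le.mp h3
  have := le_of_add_le_add_right (show w + (⨆ n : ℕ, n • w) ≤ 0 + (⨆ n : ℕ, n • w) by
    rw [zero_add]; rw [add_comm] at h4; exact h4)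
  exact this

private lemma llmc_zero_le_one
    (comp : X → X)
    (hcomp : ∀ x : X, 0 ≤ x → IsLUB (Set.range fun n : ℕ => 1 ⊓ (n • x)) (comp x))
    (pinv : X → X)
    (hpinv : ∀ x : X, 0 ≤ x → 0 ≤ pinv x ∧
      (∀ y : X, 0 ≤ y → x ⊓ y = 0 → pinv x ⊓ y = 0) ∧ x * pinv x = comp x) :
    (0 : X) ≤ 1 := by
  have hc0 : comp (0 : X) = 0 := by
    have := (hpinv 0 le_rfl).2.2
    rw [zero_mul] at this; exact this.symm
  have hlub := hcomp 0 le_rfl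
  rw [hc0] at hlub
  have h2 : (0 : X) ≤ 1 ⊓ 0 := hlub.2 (by rintro _ ⟨n, rfl⟩; simp)
  exact le_trans h2 inf_le_left

private lemma llmc_comp_disj (hmul : ∀ a b : X, 0 ≤ a → 0 ≤ b → 0 ≤ a * b)
    {c K : X} (hc : 0 ≤ c) (h01 : (0 : X) ≤ 1)
    (hK : IsLUB (Set.range fun n : ℕ => 1 ⊓ (n • c)) K) :
    c ⊓ (1 - K) = 0 := by
  have hK1 : K ≤ 1 := hK.2 (by rintro _ ⟨n, rfl⟩; exact inf_le_left)
  set w := c ⊓ (1 - K) with hw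
  have hw0 : 0 ≤ w := le_inf hc (sub_nonneg.mpr hK1)
  have hwn : ∀ n : ℕ, n • w ≤ 1 := by
    intro n
    induction n with
    | zero => simpa using h01
    | succ n ih =>
      have hwc : n • w ≤ n • c := nsmul_le_nsmul_right inf_le_left n
      have h2 : n • w ≤ 1 ⊓ n • c := le_inf ih hwc
      have h3 : n • w ≤ K := le_trans h2 (hK.1 ⟨n, rfl⟩)
      have h4 : w ≤ 1 - n • w := le_trans inf_le_right (sub_le_sub_left h3 1)
      rw [succ_nsmul]
      calc n • w + w ≤ n • w + (1 - n • w) := add_le_add_right h4 _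
        _ = 1 := by ring
  exact le_antisymm (llmc_arch hwn) hw0

private lemma llmc_key (hmul : ∀ a b : X, 0 ≤ a → 0 ≤ b → 0 ≤ a * b)
    (hfa : ∀ a b c : X, a ⊓ b = 0 → 0 ≤ c → (c * a) ⊓ b = 0)
    (comp : X → X)
    (hcomp : ∀ x : X, 0 ≤ x → IsLUB (Set.range fun n : ℕ => 1 ⊓ (n • x)) (comp x))
    (pinv : X → X)
    (hpinv : ∀ x : X, 0 ≤ x → 0 ≤ pinv x ∧
      (∀ y : X, 0 ≤ y → x ⊓ y = 0 → pinv x ⊓ y = 0) ∧ x * pinv x = comp x)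
    {ι : Type*} [Nonempty ι]
    {c b : X} (hc : 0 ≤ c) (hb : 0 ≤ b) (a : ι → X) (ha : ∀ i, 0 ≤ a i)
    (hinf : ⨅ i, a i ≤ 0) (hba : ∀ i, b ≤ c * a i) : b = 0 := by
  obtain ⟨hp0, -, hpc⟩ := hpinv c hc
  have h01 : (0:X) ≤ 1 := llmc_zero_le_one comp hcomp pinv hpinv
  have hK := hcomp c hc
  have hK1 : comp c ≤ 1 := hK.2 (by rintro _ ⟨n, rfl⟩; exact inf_le_left)
  have h1 : ∀ i, pinv c * b ≤ a i := by
    intro i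
    have step1 : pinv c * b ≤ pinv c * (c * a i) := llmc_mul_mono hmul hp0 (hba i)
    have step2 : pinv c * (c * a i) = comp c * a i := by rw [← hpc]; ring
    have step3 : comp c * a i ≤ a i := by
      have h := hmul (1 - comp c) (a i) (sub_nonneg.mpr hK1) (ha i)
      have h2 := add_le_add_right h (comp c * a i)
      calc comp c * a i = comp c * a i + 0 := by ring
        _ ≤ comp c * a i + (1 - comp c) * a i := h2
        _ = a i := by ring
    exact le_trans step1 (step2 ▸ step3)
  have h2 : pinv c * b ≤ 0 := le_trans (le_ciInf h1) hinf
  have h3 : pinv c * b = 0 := le_antisymm h2 (hmul _ _ hp0 hb)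
  have h4 : comp c * b = 0 := by rw [← hpc, mul_assoc, h3, mul_zero]
  have hdisj : c ⊓ (1 - comp c) = 0 := llmc_comp_disj hmul hc h01 hK
  obtain ⟨i0⟩ := ‹Nonempty ι›
  have h5 : (a i0 * c) ⊓ (1 - comp c) = 0 := hfa c (1 - comp c) (a i0) hdisj (ha i0)
  have h6 : b ⊓ (1 - comp c) = 0 := by
    refine le_antisymm ?_ (le_inf hb (sub_nonneg.mpr hK1))
    calc b ⊓ (1 - comp c) ≤ (a i0 * c) ⊓ (1 - comp c) :=
          inf_le_inf_right _ (le_trans (hba i0) (by rw [mul_comm]))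
      _ = 0 := h5
  have h7 : b * (1 - comp c) = b := by
    have hbK : b * comp c = 0 := by rw [mul_comm]; exact h4
    calc b * (1 - comp c) = b - b * comp c := by ring
      _ = b := by rw [hbK, sub_zero]
  have h8 : (b * (1 - comp c)) ⊓ b = 0 := hfa (1 - comp c) b b (by rwa [inf_comm] at h6) hb
  rw [h7, inf_idem] at h8
  exact h8

private lemma llmc_mul_ciInf (hmul : ∀ a b : X, 0 ≤ a → 0 ≤ b → 0 ≤ a * b)
    (hfa : ∀ a b c : X, a ⊓ b = 0 → 0 ≤ c → (c * a) ⊓ b = 0)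
    (comp : X → X)
    (hcomp : ∀ x : X, 0 ≤ x → IsLUB (Set.range fun n : ℕ => 1 ⊓ (n • x)) (comp x))
    (pinv : X → X)
    (hpinv : ∀ x : X, 0 ≤ x → 0 ≤ pinv x ∧
      (∀ y : X, 0 ≤ y → x ⊓ y = 0 → pinv x ⊓ y = 0) ∧ x * pinv x = comp x)
    {ι : Type*} [Nonempty ι]
    {c : X} (hc : 0 ≤ c) (a : ι → X) (ha : ∀ i, 0 ≤ a i) :
    c * (⨅ i, a i) = ⨅ i, c * a i := by
  have hbdd : BddBelow (Set.range a) := ⟨0, by rintro _ ⟨i, rfl⟩; exact ha i⟩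
  have hbdd2 : BddBelow (Set.range fun i => c * a i) :=
    ⟨0, by rintro _ ⟨i, rfl⟩; exact hmul _ _ hc (ha i)⟩
  have hm0 : (0 : X) ≤ ⨅ i, a i := le_ciInf ha
  have h1 : c * (⨅ i, a i) ≤ ⨅ i, c * a i :=
    le_ciInf fun i => llmc_mul_mono hmul hc (ciInf_le hbdd i)
  have hb : 0 ≤ (⨅ i, c * a i) - c * (⨅ i, a i) := sub_nonneg.mpr h1
  have h2 : ∀ i, (⨅ i, c * a i) - c * (⨅ i, a i) ≤ c * (a i - ⨅ j, a j) := by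
    intro i
    calc (⨅ j, c * a j) - c * (⨅ j, a j) ≤ c * a i - c * (⨅ j, a j) :=
          sub_le_sub_right (ciInf_le hbdd2 i) _
      _ = c * (a i - ⨅ j, a j) := by ring
  have hbdd3 : BddBelow (Set.range fun i => a i - ⨅ j, a j) :=
    ⟨0, by rintro _ ⟨i, rfl⟩; exact sub_nonneg.mpr (ciInf_le hbdd i)⟩
  have h4 : (⨅ i, (a i - ⨅ j, a j)) ≤ 0 := by
    have h5 : (⨅ i, (a i - ⨅ j, a j)) + (⨅ j, a j) ≤ ⨅ j, a j := by
      refine le_ciInf fun i => ?_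
      calc (⨅ i, (a i - ⨅ j, a j)) + (⨅ j, a j) ≤ (a i - ⨅ j, a j) + (⨅ j, a j) :=
            add_le_add_left (ciInf_le hbdd3 i) _
        _ = a i := by ring
    have := le_of_add_le_add_right (show (⨅ i, (a i - ⨅ j, a j)) + (⨅ j, a j) ≤ 0 + (⨅ j, a j) by
      rw [zero_add]; exact h5)
    exact this
  have hk := llmc_key hmul hfa comp hcomp pinv hpinv hc hb
    (fun i => a i - ⨅ j, a j) (fun i => sub_nonneg.mpr (ciInf_le hbdd i)) h4 h2
  have := sub_eq_zero.mp hk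
  exact this.symm

private lemma llmc_mul_ciSup (hmul : ∀ a b : X, 0 ≤ a → 0 ≤ b → 0 ≤ a * b)
    (hfa : ∀ a b c : X, a ⊓ b = 0 → 0 ≤ c → (c * a) ⊓ b = 0)
    (comp : X → X)
    (hcomp : ∀ x : X, 0 ≤ x → IsLUB (Set.range fun n : ℕ => 1 ⊓ (n • x)) (comp x))
    (pinv : X → X)
    (hpinv : ∀ x : X, 0 ≤ x → 0 ≤ pinv x ∧
      (∀ y : X, 0 ≤ y → x ⊓ y = 0 → pinv x ⊓ y = 0) ∧ x * pinv x = comp x)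
    {ι : Type*} [Nonempty ι]
    {c : X} (hc : 0 ≤ c) (a : ι → X) (ha : ∀ i, 0 ≤ a i)
    (hbdd : BddAbove (Set.range a)) :
    c * (⨆ i, a i) = ⨆ i, c * a i := by
  have hMi : ∀ i, a i ≤ ⨆ j, a j := fun i => le_ciSup hbdd i
  have hbdd2 : BddAbove (Set.range fun i => c * a i) :=
    ⟨c * ⨆ j, a j, by rintro _ ⟨i, rfl⟩; exact llmc_mul_mono hmul hc (hMi i)⟩
  have h1 : (⨆ i, c * a i) ≤ c * ⨆ j, a j := ciSup_le fun i => llmc_mul_mono hmul hc (hMi i)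
  have hb : 0 ≤ c * (⨆ j, a j) - ⨆ i, c * a i := sub_nonneg.mpr h1
  have h2 : ∀ i, c * (⨆ j, a j) - (⨆ i, c * a i) ≤ c * ((⨆ j, a j) - a i) := by
    intro i
    calc c * (⨆ j, a j) - (⨆ j, c * a j) ≤ c * (⨆ j, a j) - c * a i :=
          sub_le_sub_left (le_ciSup hbdd2 i) _
      _ = c * ((⨆ j, a j) - a i) := by ring
  have h4 : (⨅ i, ((⨆ j, a j) - a i)) ≤ 0 := by
    have h5 : (⨆ j, a j) ≤ (⨆ j, a j) - ⨅ i, ((⨆ j, a j) - a i) := by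
      refine ciSup_le fun i => ?_
      have h6 : (⨅ i, ((⨆ j, a j) - a i)) ≤ (⨆ j, a j) - a i :=
        ciInf_le ⟨0, by rintro _ ⟨i, rfl⟩; exact sub_nonneg.mpr (hMi i)⟩ i
      have h7 : (⨅ i, ((⨆ j, a j) - a i)) + a i ≤ (⨆ j, a j) := by
        calc (⨅ i, ((⨆ j, a j) - a i)) + a i ≤ ((⨆ j, a j) - a i) + a i :=
              add_le_add_left h6 _
          _ = ⨆ j, a j := by ring
      rw [add_comm] at h7
      exact le_sub_iff_add_le.mpr h7
    have h8 := le_sub_iff_add_le.mp h5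
    have := le_of_add_le_add_left (show (⨆ j, a j) + (⨅ i, ((⨆ j, a j) - a i)) ≤ (⨆ j, a j) + 0 by
      rw [add_zero]; exact h8)
    exact this
  have hk := llmc_key hmul hfa comp hcomp pinv hpinv hc hb
    (fun i => (⨆ j, a j) - a i) (fun i => sub_nonneg.mpr (hMi i)) h4 h2
  have := sub_eq_zero.mp hk
  exact this

end LiminfLimsupMulAux

/-- For order bounded nets `(x_α)`, `(y_α)` of positive elements in a
universally complete `f`-algebra with unit (with `liminf`/`limsup` defined via
tail infima/suprema):
`liminf x · liminf y ≤ liminf (x·y) ≤ liminf x · limsup y ≤ limsup (x·y)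
  ≤ limsup x · limsup y`. -/
theorem liminf_limsup_mul_chain {X : Type*} [ConditionallyCompleteLattice X]
    [CommRing X] [CovariantClass X X (· + ·) (· ≤ ·)]
    {A : Type*} [Nonempty A] [SemilatticeSup A]
    (hmul : ∀ a b : X, 0 ≤ a → 0 ≤ b → 0 ≤ a * b)
    (hfa : ∀ a b c : X, a ⊓ b = 0 → 0 ≤ c → (c * a) ⊓ b = 0)
    (comp : X → X)
    (hcomp : ∀ x : X, 0 ≤ x → IsLUB (Set.range fun n : ℕ => 1 ⊓ (n • x)) (comp x))
    (pinv : X → X)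
    (hpinv : ∀ x : X, 0 ≤ x → 0 ≤ pinv x ∧
      (∀ y : X, 0 ≤ y → x ⊓ y = 0 → pinv x ⊓ y = 0) ∧ x * pinv x = comp x)
    (x y : A → X) (hxpos : ∀ α, 0 ≤ x α) (hypos : ∀ α, 0 ≤ y α)
    (bx by' : X) (hbx : ∀ α, x α ≤ bx) (hby : ∀ α, y α ≤ by') :
    (⨆ β, ⨅ α : {α // β ≤ α}, x α.1) * (⨆ β, ⨅ α : {α // β ≤ α}, y α.1) ≤
      (⨆ β, ⨅ α : {α // β ≤ α}, x α.1 * y α.1) ∧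
    (⨆ β, ⨅ α : {α // β ≤ α}, x α.1 * y α.1) ≤
      (⨆ β, ⨅ α : {α // β ≤ α}, x α.1) * (⨅ β, ⨆ α : {α // β ≤ α}, y α.1) ∧
    (⨆ β, ⨅ α : {α // β ≤ α}, x α.1) * (⨅ β, ⨆ α : {α // β ≤ α}, y α.1) ≤
      (⨅ β, ⨆ α : {α // β ≤ α}, x α.1 * y α.1) ∧
    (⨅ β, ⨆ α : {α // β ≤ α}, x α.1 * y α.1) ≤
      (⨅ β, ⨆ α : {α // β ≤ α}, x α.1) * (⨅ β, ⨆ α : {α // β ≤ α}, y α.1) := by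
  obtain ⟨α0⟩ := ‹Nonempty A›
  haveI hne : ∀ β : A, Nonempty {α // β ≤ α} := fun β => ⟨⟨β, le_rfl⟩⟩
  have hby0 : (0 : X) ≤ by' := le_trans (hypos α0) (hby α0)
  have hbx0 : (0 : X) ≤ bx := le_trans (hxpos α0) (hbx α0)
  have hxy_pos : ∀ α, 0 ≤ x α * y α := fun α => hmul _ _ (hxpos α) (hypos α)
  have hxy_le : ∀ α, x α * y α ≤ bx * by' := fun α => by
    calc x α * y α ≤ x α * by' := llmc_mul_mono hmul (hxpos α) (hby α)
      _ = by' * x α := mul_comm _ _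
      _ ≤ by' * bx := llmc_mul_mono hmul hby0 (hbx α)
      _ = bx * by' := mul_comm _ _
  -- bounds for tails
  have hIx_bddB : ∀ β : A, BddBelow (Set.range fun α : {α // β ≤ α} => x α.1) :=
    fun β => ⟨0, by rintro _ ⟨α, rfl⟩; exact hxpos _⟩
  have hIy_bddB : ∀ β : A, BddBelow (Set.range fun α : {α // β ≤ α} => y α.1) :=
    fun β => ⟨0, by rintro _ ⟨α, rfl⟩; exact hypos _⟩
  have hIxy_bddB : ∀ β : A, BddBelow (Set.range fun α : {α // β ≤ α} => x α.1 * y α.1) :=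
    fun β => ⟨0, by rintro _ ⟨α, rfl⟩; exact hxy_pos _⟩
  have hSx_bddA : ∀ β : A, BddAbove (Set.range fun α : {α // β ≤ α} => x α.1) :=
    fun β => ⟨bx, by rintro _ ⟨α, rfl⟩; exact hbx _⟩
  have hSy_bddA : ∀ β : A, BddAbove (Set.range fun α : {α // β ≤ α} => y α.1) :=
    fun β => ⟨by', by rintro _ ⟨α, rfl⟩; exact hby _⟩
  have hSxy_bddA : ∀ β : A, BddAbove (Set.range fun α : {α // β ≤ α} => x α.1 * y α.1) :=
    fun β => ⟨bx * by', by rintro _ ⟨α, rfl⟩; exact hxy_le _⟩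
  have hIx_pos : ∀ β : A, 0 ≤ ⨅ α : {α // β ≤ α}, x α.1 :=
    fun β => le_ciInf fun α => hxpos _
  have hIy_pos : ∀ β : A, 0 ≤ ⨅ α : {α // β ≤ α}, y α.1 :=
    fun β => le_ciInf fun α => hypos _
  have hIx_le : ∀ β : A, (⨅ α : {α // β ≤ α}, x α.1) ≤ bx :=
    fun β => le_trans (ciInf_le (hIx_bddB β) ⟨β, le_rfl⟩) (hbx β)
  have hIy_le : ∀ β : A, (⨅ α : {α // β ≤ α}, y α.1) ≤ by' :=
    fun β => le_trans (ciInf_le (hIy_bddB β) ⟨β, le_rfl⟩) (hby β)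
  have hIxy_le : ∀ β : A, (⨅ α : {α // β ≤ α}, x α.1 * y α.1) ≤ bx * by' :=
    fun β => le_trans (ciInf_le (hIxy_bddB β) ⟨β, le_rfl⟩) (hxy_le β)
  have hSx_pos : ∀ β : A, 0 ≤ ⨆ α : {α // β ≤ α}, x α.1 :=
    fun β => le_trans (hxpos β) (le_ciSup (hSx_bddA β) ⟨β, le_rfl⟩)
  have hSy_pos : ∀ β : A, 0 ≤ ⨆ α : {α // β ≤ α}, y α.1 :=
    fun β => le_trans (hypos β) (le_ciSup (hSy_bddA β) ⟨β, le_rfl⟩)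
  have hSxy_pos : ∀ β : A, 0 ≤ ⨆ α : {α // β ≤ α}, x α.1 * y α.1 :=
    fun β => le_trans (hxy_pos β) (le_ciSup (hSxy_bddA β) ⟨β, le_rfl⟩)
  have hLx_bddA : BddAbove (Set.range fun β : A => ⨅ α : {α // β ≤ α}, x α.1) :=
    ⟨bx, by rintro _ ⟨β, rfl⟩; exact hIx_le β⟩
  have hLy_bddA : BddAbove (Set.range fun β : A => ⨅ α : {α // β ≤ α}, y α.1) :=
    ⟨by', by rintro _ ⟨β, rfl⟩; exact hIy_le β⟩
  have hLxy_bddA : BddAbove (Set.range fun β : A => ⨅ α : {α // β ≤ α}, x α.1 * y α.1) :=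
    ⟨bx * by', by rintro _ ⟨β, rfl⟩; exact hIxy_le β⟩
  have hUy_bddB : BddBelow (Set.range fun β : A => ⨆ α : {α // β ≤ α}, y α.1) :=
    ⟨0, by rintro _ ⟨β, rfl⟩; exact hSy_pos β⟩
  have hUxy_bddB : BddBelow (Set.range fun β : A => ⨆ α : {α // β ≤ α}, x α.1 * y α.1) :=
    ⟨0, by rintro _ ⟨β, rfl⟩; exact hSxy_pos β⟩
  have hLx_pos : 0 ≤ ⨆ β : A, ⨅ α : {α // β ≤ α}, x α.1 :=
    le_trans (hIx_pos α0) (le_ciSup hLx_bddA α0)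
  have hUy_pos : 0 ≤ ⨅ β : A, ⨆ α : {α // β ≤ α}, y α.1 := le_ciInf hSy_pos
  refine ⟨?_, ?_, ?_, ?_⟩
  · -- Part 1 : Lx * Ly ≤ Lxy
    calc (⨆ β, ⨅ α : {α // β ≤ α}, x α.1) * (⨆ β, ⨅ α : {α // β ≤ α}, y α.1)
        = ⨆ β, (⨆ γ, ⨅ α : {α // γ ≤ α}, x α.1) * ⨅ α : {α // β ≤ α}, y α.1 :=
          llmc_mul_ciSup hmul hfa comp hcomp pinv hpinv hLx_pos
            (fun β => ⨅ α : {α // β ≤ α}, y α.1) hIy_pos hLy_bddA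
      _ ≤ ⨆ β, ⨅ α : {α // β ≤ α}, x α.1 * y α.1 := by
          refine ciSup_le fun β => ?_
          calc (⨆ γ, ⨅ α : {α // γ ≤ α}, x α.1) * (⨅ α : {α // β ≤ α}, y α.1)
              = (⨅ α : {α // β ≤ α}, y α.1) * ⨆ γ, ⨅ α : {α // γ ≤ α}, x α.1 := mul_comm _ _
            _ = ⨆ γ, (⨅ α : {α // β ≤ α}, y α.1) * ⨅ α : {α // γ ≤ α}, x α.1 :=
                llmc_mul_ciSup hmul hfa comp hcomp pinv hpinv (hIy_pos β)
                  (fun γ => ⨅ α : {α // γ ≤ α}, x α.1) hIx_pos hLx_bddA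
            _ ≤ ⨆ β, ⨅ α : {α // β ≤ α}, x α.1 * y α.1 := by
                refine ciSup_le fun γ => ?_
                refine le_trans ?_ (le_ciSup hLxy_bddA (β ⊔ γ))
                refine le_ciInf fun α => ?_
                calc (⨅ α : {α // β ≤ α}, y α.1) * (⨅ α : {α // γ ≤ α}, x α.1)
                    ≤ (⨅ α : {α // β ≤ α}, y α.1) * x α.1 :=
                      llmc_mul_mono hmul (hIy_pos β)
                        (ciInf_le (hIx_bddB γ) ⟨α.1, le_trans le_sup_right α.2⟩)
                  _ = x α.1 * ⨅ α : {α // β ≤ α}, y α.1 := mul_comm _ _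
                  _ ≤ x α.1 * y α.1 :=
                      llmc_mul_mono hmul (hxpos _)
                        (ciInf_le (hIy_bddB β) ⟨α.1, le_trans le_sup_left α.2⟩)
  · -- Part 2 : Lxy ≤ Lx * Uy
    calc (⨆ β, ⨅ α : {α // β ≤ α}, x α.1 * y α.1)
        ≤ ⨅ δ, (⨆ β, ⨅ α : {α // β ≤ α}, x α.1) * ⨆ α : {α // δ ≤ α}, y α.1 := by
          refine le_ciInf fun δ => ciSup_le fun β => ?_
          calc (⨅ α : {α // β ≤ α}, x α.1 * y α.1)
              ≤ ⨅ α : {α // β ⊔ δ ≤ α}, (⨆ α' : {α // δ ≤ α}, y α'.1) * x α.1 := by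
                refine le_ciInf fun α => ?_
                calc (⨅ α : {α // β ≤ α}, x α.1 * y α.1)
                    ≤ x α.1 * y α.1 := ciInf_le (hIxy_bddB β) ⟨α.1, le_trans le_sup_left α.2⟩
                  _ ≤ x α.1 * ⨆ α' : {α // δ ≤ α}, y α'.1 :=
                      llmc_mul_mono hmul (hxpos _)
                        (le_ciSup (hSy_bddA δ) ⟨α.1, le_trans le_sup_right α.2⟩)
                  _ = (⨆ α' : {α // δ ≤ α}, y α'.1) * x α.1 := mul_comm _ _
            _ = (⨆ α' : {α // δ ≤ α}, y α'.1) * ⨅ α : {α // β ⊔ δ ≤ α}, x α.1 :=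
                (llmc_mul_ciInf hmul hfa comp hcomp pinv hpinv (hSy_pos δ)
                  (fun α : {α // β ⊔ δ ≤ α} => x α.1) (fun α => hxpos _)).symm
            _ ≤ (⨆ α' : {α // δ ≤ α}, y α'.1) * ⨆ β, ⨅ α : {α // β ≤ α}, x α.1 :=
                llmc_mul_mono hmul (hSy_pos δ) (le_ciSup hLx_bddA (β ⊔ δ))
            _ = (⨆ β, ⨅ α : {α // β ≤ α}, x α.1) * ⨆ α' : {α // δ ≤ α}, y α'.1 := mul_comm _ _
      _ = (⨆ β, ⨅ α : {α // β ≤ α}, x α.1) * ⨅ β, ⨆ α : {α // β ≤ α}, y α.1 :=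
          (llmc_mul_ciInf hmul hfa comp hcomp pinv hpinv hLx_pos
            (fun δ => ⨆ α : {α // δ ≤ α}, y α.1) hSy_pos).symm
  · -- Part 3 : Lx * Uy ≤ Uxy
    refine le_ciInf fun β => ?_
    calc (⨆ β, ⨅ α : {α // β ≤ α}, x α.1) * (⨅ β, ⨆ α : {α // β ≤ α}, y α.1)
        = (⨅ β, ⨆ α : {α // β ≤ α}, y α.1) * ⨆ β, ⨅ α : {α // β ≤ α}, x α.1 := mul_comm _ _
      _ = ⨆ γ, (⨅ β, ⨆ α : {α // β ≤ α}, y α.1) * ⨅ α : {α // γ ≤ α}, x α.1 :=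
          llmc_mul_ciSup hmul hfa comp hcomp pinv hpinv hUy_pos
            (fun γ => ⨅ α : {α // γ ≤ α}, x α.1) hIx_pos hLx_bddA
      _ ≤ ⨆ α : {α // β ≤ α}, x α.1 * y α.1 := by
          refine ciSup_le fun γ => ?_
          calc (⨅ β, ⨆ α : {α // β ≤ α}, y α.1) * (⨅ α : {α // γ ≤ α}, x α.1)
              = (⨅ α : {α // γ ≤ α}, x α.1) * ⨅ β, ⨆ α : {α // β ≤ α}, y α.1 := mul_comm _ _
            _ ≤ (⨅ α : {α // γ ≤ α}, x α.1) * ⨆ α : {α // β ⊔ γ ≤ α}, y α.1 :=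
                llmc_mul_mono hmul (hIx_pos γ) (ciInf_le hUy_bddB (β ⊔ γ))
            _ = ⨆ α : {α // β ⊔ γ ≤ α}, (⨅ α' : {α // γ ≤ α}, x α'.1) * y α.1 :=
                llmc_mul_ciSup hmul hfa comp hcomp pinv hpinv (hIx_pos γ)
                  (fun α : {α // β ⊔ γ ≤ α} => y α.1) (fun α => hypos _) (hSy_bddA (β ⊔ γ))
            _ ≤ ⨆ α : {α // β ≤ α}, x α.1 * y α.1 := by
                refine ciSup_le fun α => ?_
                refine le_trans ?_ (le_ciSup (hSxy_bddA β) ⟨α.1, le_trans le_sup_left α.2⟩)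
                calc (⨅ α' : {α // γ ≤ α}, x α'.1) * y α.1
                    = y α.1 * ⨅ α' : {α // γ ≤ α}, x α'.1 := mul_comm _ _
                  _ ≤ y α.1 * x α.1 :=
                      llmc_mul_mono hmul (hypos _)
                        (ciInf_le (hIx_bddB γ) ⟨α.1, le_trans le_sup_right α.2⟩)
                  _ = x α.1 * y α.1 := mul_comm _ _
  · -- Part 4 : Uxy ≤ Ux * Uy
    have hrw : (⨅ β, ⨆ α : {α // β ≤ α}, x α.1) * (⨅ β, ⨆ α : {α // β ≤ α}, y α.1)
        = ⨅ γ, (⨆ α : {α // γ ≤ α}, x α.1) * ⨅ β, ⨆ α : {α // β ≤ α}, y α.1 := by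
      calc (⨅ β, ⨆ α : {α // β ≤ α}, x α.1) * (⨅ β, ⨆ α : {α // β ≤ α}, y α.1)
          = (⨅ β, ⨆ α : {α // β ≤ α}, y α.1) * ⨅ β, ⨆ α : {α // β ≤ α}, x α.1 := mul_comm _ _
        _ = ⨅ γ, (⨅ β, ⨆ α : {α // β ≤ α}, y α.1) * ⨆ α : {α // γ ≤ α}, x α.1 :=
            llmc_mul_ciInf hmul hfa comp hcomp pinv hpinv hUy_pos
              (fun γ => ⨆ α : {α // γ ≤ α}, x α.1) hSx_pos
        _ = ⨅ γ, (⨆ α : {α // γ ≤ α}, x α.1) * ⨅ β, ⨆ α : {α // β ≤ α}, y α.1 :=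
            iInf_congr fun γ => mul_comm _ _
    rw [hrw]
    refine le_ciInf fun γ => ?_
    calc (⨅ β, ⨆ α : {α // β ≤ α}, x α.1 * y α.1)
        ≤ ⨅ δ, (⨆ α : {α // γ ≤ α}, x α.1) * ⨆ α : {α // δ ≤ α}, y α.1 := by
          refine le_ciInf fun δ => ?_
          calc (⨅ β, ⨆ α : {α // β ≤ α}, x α.1 * y α.1)
              ≤ ⨆ α : {α // γ ⊔ δ ≤ α}, x α.1 * y α.1 := ciInf_le hUxy_bddB (γ ⊔ δ)
            _ ≤ (⨆ α : {α // γ ≤ α}, x α.1) * ⨆ α : {α // δ ≤ α}, y α.1 := by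
                refine ciSup_le fun α => ?_
                calc x α.1 * y α.1
                    ≤ x α.1 * ⨆ α' : {α // δ ≤ α}, y α'.1 :=
                      llmc_mul_mono hmul (hxpos _)
                        (le_ciSup (hSy_bddA δ) ⟨α.1, le_trans le_sup_right α.2⟩)
                  _ = (⨆ α' : {α // δ ≤ α}, y α'.1) * x α.1 := mul_comm _ _
                  _ ≤ (⨆ α' : {α // δ ≤ α}, y α'.1) * ⨆ α' : {α // γ ≤ α}, x α'.1 :=
                      llmc_mul_mono hmul (hSy_pos δ)
                        (le_ciSup (hSx_bddA γ) ⟨α.1, le_trans le_sup_left α.2⟩)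
                  _ = (⨆ α' : {α // γ ≤ α}, x α'.1) * ⨆ α' : {α // δ ≤ α}, y α'.1 := mul_comm _ _
      _ = (⨆ α : {α // γ ≤ α}, x α.1) * ⨅ β, ⨆ α : {α // β ≤ α}, y α.1 :=
          (llmc_mul_ciInf hmul hfa comp hcomp pinv hpinv (hSx_pos γ)
            (fun δ => ⨆ α : {α // δ ≤ α}, y α.1) hSy_pos).symm
end

section
/- Let X be a universally complete f-algebra with unit e and x, y, z ∈ X_+ with x ≤ y·z. Then there exist a, b ∈ X_+ with 0 ≤ a ≤ y, 0 ≤ b ≤ z and x = a·b. (Finite-element version of the multiplicative decomposition; e.g. a = y and b = y*·x works when x lies in the band generated by y.) -/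
/-!
Take `a = y` and `b = y* x`, where `y*` is the partial inverse and `c = y y*` the component of
the unit in the band of `y`. Since `c` is the supremum of `1 ⊓ n y`, every `n • (y ⊓ (1 - c))` lies
below `c`, so `y ⊥ 1 - c` because a conditionally complete lattice-ordered group is Archimedean.
The f-algebra axiom carries this disjointness over to `x ≤ z y`, and a positive element disjoint
from `1 - c` is killed by it, so `x = c x = y (y* x)`. Finally `y* x ≤ y* y z = c z ≤ z`.
-/

theorem eq_zero_of_forall_nsmul_le {G : Type*} [ConditionallyCompleteLattice G] [AddCommGroup G]
    [AddLeftMono G] {t c : G} (ht : 0 ≤ t) (h : ∀ n : ℕ, n • t ≤ c) : t = 0 := by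
  have hbdd : BddAbove (Set.range fun n : ℕ => n • t) := ⟨c, by rintro _ ⟨n, rfl⟩; exact h n⟩
  have hs : ⨆ n : ℕ, n • t ≤ (⨆ n : ℕ, n • t) - t :=
    ciSup_le fun n => le_sub_iff_add_le.2 <| succ_nsmul t n ▸ le_ciSup hbdd (n + 1)
  exact le_antisymm ((le_sub_self_iff _).1 hs) ht

theorem inf_sub_eq_zero_of_isLUB_inf_nsmul {G : Type*} [ConditionallyCompleteLattice G]
    [AddCommGroup G] [AddLeftMono G] {e y c : G} (he : 0 ≤ e) (hy : 0 ≤ y)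
    (hc : IsLUB (Set.range fun n : ℕ => e ⊓ n • y) c) : y ⊓ (e - c) = 0 := by
  have hce : c ≤ e := hc.2 (by rintro _ ⟨n, rfl⟩; exact inf_le_left)
  have hc0 : 0 ≤ c := le_trans (by simpa using he) (hc.1 ⟨0, rfl⟩)
  refine eq_zero_of_forall_nsmul_le (c := c) (le_inf hy (sub_nonneg.2 hce)) fun n => ?_
  induction n with
  | zero => simpa using hc0
  | succ n ih =>
    have hle_e : (n + 1) • (y ⊓ (e - c)) ≤ e := by
      calc (n + 1) • (y ⊓ (e - c)) = n • (y ⊓ (e - c)) + y ⊓ (e - c) := succ_nsmul _ n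
        _ ≤ c + (e - c) := add_le_add ih inf_le_right
        _ = e := add_sub_cancel c e
    exact (le_inf hle_e (nsmul_le_nsmul_right inf_le_left _)).trans (hc.1 ⟨n + 1, rfl⟩)

theorem posMulMono_of_mul_nonneg {R : Type*} [Ring R] [PartialOrder R] [AddLeftMono R]
    (h : ∀ a b : R, 0 ≤ a → 0 ≤ b → 0 ≤ a * b) : PosMulMono R where
  mul_le_mul_of_nonneg_left a ha b c hbc := by
    simpa only [mul_sub, sub_nonneg] using h _ _ ha (sub_nonneg.2 hbc)

section FAlgebra

variable {R : Type*} [Lattice R]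

theorem inf_eq_zero_of_le_mul [CommMonoidWithZero R]
    (hfa : ∀ a b c : R, a ⊓ b = 0 → 0 ≤ c → (c * a) ⊓ b = 0) {x y z d : R}
    (hyd : y ⊓ d = 0) (hx : 0 ≤ x) (hz : 0 ≤ z) (hd : 0 ≤ d) (h : x ≤ y * z) : x ⊓ d = 0 :=
  le_antisymm (hfa y d z hyd hz ▸ inf_le_inf_right d (mul_comm y z ▸ h)) (le_inf hx hd)

theorem mul_eq_zero_of_inf_eq_zero [MulZeroOneClass R] [PosMulMono R]
    (hfa : ∀ a b c : R, a ⊓ b = 0 → 0 ≤ c → (c * a) ⊓ b = 0) {a b : R}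
    (ha : 0 ≤ a) (hb : b ≤ 1) (hab : a ⊓ b = 0) : a * b = 0 := by
  rw [← hfa b a a (inf_comm a b ▸ hab) ha]
  exact (inf_eq_left.2 (mul_le_of_le_one_right ha hb)).symm

end FAlgebra

/-- Multiplicative decomposition in a universally complete `f`-algebra with
unit: if `0 ≤ x ≤ y·z` with `y, z ≥ 0`, then `x = a·b` for some
`0 ≤ a ≤ y` and `0 ≤ b ≤ z`. -/
theorem multiplicative_decomposition {X : Type*} [ConditionallyCompleteLattice X]
    [CommRing X] [CovariantClass X X (· + ·) (· ≤ ·)]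
    (hmul : ∀ a b : X, 0 ≤ a → 0 ≤ b → 0 ≤ a * b)
    (hfa : ∀ a b c : X, a ⊓ b = 0 → 0 ≤ c → (c * a) ⊓ b = 0)
    (comp : X → X)
    (hcomp : ∀ x : X, 0 ≤ x → IsLUB (Set.range fun n : ℕ => 1 ⊓ (n • x)) (comp x))
    (pinv : X → X)
    (hpinv : ∀ x : X, 0 ≤ x → 0 ≤ pinv x ∧
      (∀ y : X, 0 ≤ y → x ⊓ y = 0 → pinv x ⊓ y = 0) ∧ x * pinv x = comp x)
    (x y z : X) (hx : 0 ≤ x) (hy : 0 ≤ y) (hz : 0 ≤ z) (h : x ≤ y * z) :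
    ∃ a b : X, 0 ≤ a ∧ a ≤ y ∧ 0 ≤ b ∧ b ≤ z ∧ x = a * b := by
  have := posMulMono_of_mul_nonneg hmul
  obtain ⟨hp0, -, hpy⟩ := hpinv y hy
  have hc0 : 0 ≤ comp y := hpy ▸ mul_nonneg hy hp0
  have hc1 : comp y ≤ 1 := (hcomp y hy).2 (by rintro _ ⟨n, rfl⟩; exact inf_le_left)
  have hyd : y ⊓ (1 - comp y) = 0 :=
    inf_sub_eq_zero_of_isLUB_inf_nsmul (hc0.trans hc1) hy (hcomp y hy)
  have hxd : x * (1 - comp y) = 0 :=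
    mul_eq_zero_of_inf_eq_zero hfa hx (sub_le_self 1 hc0)
      (inf_eq_zero_of_le_mul hfa hyd hx hz (sub_nonneg.2 hc1) h)
  refine ⟨y, pinv y * x, hy, le_rfl, mul_nonneg hp0 hx, ?_, ?_⟩
  · calc pinv y * x ≤ pinv y * (y * z) := mul_le_mul_of_nonneg_left h hp0
      _ = z * comp y := by rw [← hpy]; ring
      _ ≤ z := mul_le_of_le_one_right hz hc1
  · rw [← mul_assoc, hpy, mul_comm, ← sub_eq_zero, ← mul_one_sub, hxd]
end

section
/- Let X be a semiprime commutative f-algebra (or a formally real commutative ring where positive semi-definite 2×2 symmetric matrices have nonnegative determinant in the appropriate sense), and let M = (m_{ij}) be an n×n symmetric positive semi-definite matrix over X in the sense that ∑_{i,j} m_{ij} x_i x_j ≥ 0 for all x ∈ Xⁿ. For n = 2: m_{11} ≥ 0, m_{22} ≥ 0, and m_{11} m_{22} − m_{12}² ≥ 0. -/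
/-- In a semiprime commutative `f`-algebra (modeled as a lattice-ordered
commutative ring with positive multiplication, the `f`-algebra axiom, and no
nonzero nilpotents), a symmetric `2 × 2` matrix which is positive semi-definite
(i.e. `∑ m_{ij} x_i x_j ≥ 0` for all vectors `x`) satisfies `m₁₁ ≥ 0`,
`m₂₂ ≥ 0` and `m₁₁ m₂₂ − m₁₂² ≥ 0`. -/
theorem psd_two_by_two_det_nonneg {X : Type*} [CommRing X] [Lattice X]
    [CovariantClass X X (· + ·) (· ≤ ·)]
    (hmul : ∀ a b : X, 0 ≤ a → 0 ≤ b → 0 ≤ a * b)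
    (hfa : ∀ a b c : X, a ⊓ b = 0 → 0 ≤ c → (c * a) ⊓ b = 0)
    (hsemi : ∀ a : X, a * a = 0 → a = 0)
    (M : Matrix (Fin 2) (Fin 2) X) (hsymm : M 0 1 = M 1 0)
    (hpsd : ∀ v : Fin 2 → X, 0 ≤ ∑ i, ∑ j, M i j * v i * v j) :
    0 ≤ M 0 0 ∧ 0 ≤ M 1 1 ∧ 0 ≤ M 0 0 * M 1 1 - (M 0 1) ^ 2 := by
  -- the positive and negative part of every element multiply to zero
  have hpnmul : ∀ x : X, x⁺ * x⁻ = 0 := by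
    intro x
    have h1 : (x⁻ * x⁺) ⊓ x⁻ = 0 :=
      hfa x⁺ x⁻ x⁻ (posPart_inf_negPart_eq_zero x) (negPart_nonneg x)
    have h2 : (x⁺ * x⁻) ⊓ (x⁻ * x⁺) = 0 :=
      hfa x⁻ (x⁻ * x⁺) x⁺ (by rw [inf_comm]; exact h1) (posPart_nonneg x)
    rwa [mul_comm x⁻ x⁺, inf_idem] at h2
  -- squares are nonnegative
  have hsq : ∀ x : X, 0 ≤ x * x := by
    intro x
    have hx : x = x⁺ - x⁻ := (posPart_sub_negPart x).symm
    have h0 : 0 ≤ x⁺ * x⁺ + x⁻ * x⁻ :=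
      add_nonneg (hmul _ _ (posPart_nonneg x) (posPart_nonneg x))
        (hmul _ _ (negPart_nonneg x) (negPart_nonneg x))
    have he : x * x = x⁺ * x⁺ + x⁻ * x⁻ := by
      linear_combination (x + x⁺ - x⁻) * hx + (-2 : X) * hpnmul x
    rwa [he]
  set a := M 0 0 with ha'
  set b := M 0 1 with hb'
  set c := M 1 1 with hc'
  have hQ : ∀ x y : X, 0 ≤ a * x * x + b * x * y + b * y * x + c * y * y := by
    intro x y
    have := hpsd ![x, y]
    simpa [Fin.sum_univ_two, ← hsymm, ← ha', ← hb', ← hc', add_assoc] using this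
  have ha : 0 ≤ a := by simpa using hQ 1 0
  have hc : 0 ≤ c := by simpa using hQ 0 1
  refine ⟨ha, hc, ?_⟩
  set d : X := a * c - b ^ 2 with hd'
  set n : X := d⁻ with hn'
  set p : X := d⁺ with hp'
  have hn0 : 0 ≤ n := negPart_nonneg d
  have hpsub : p - n = d := posPart_sub_negPart d
  have hpn : p * n = 0 := hpnmul d
  have hdn : d * n = -(n * n) := by
    rw [← hpsub]; linear_combination hpn
  have hnn : 0 ≤ n * n := hmul n n hn0 hn0
  -- a * d ≥ 0 and c * d ≥ 0
  have had : 0 ≤ a * d := by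
    have h := hQ b (-a)
    have he : a * b * b + b * b * (-a) + b * (-a) * b + c * (-a) * (-a) = a * d := by
      rw [hd']; ring
    rwa [he] at h
  have hcd : 0 ≤ c * d := by
    have h := hQ c (-b)
    have he : a * c * c + b * c * (-b) + b * (-b) * c + c * (-b) * (-b) = c * d := by
      rw [hd']; ring
    rwa [he] at h
  -- a * n² = 0 and c * n² = 0
  have han2 : a * (n * n) = 0 := by
    have h3 : 0 ≤ n * (a * d) := hmul n (a * d) hn0 had
    have h4 : n * (a * d) = -(a * (n * n)) := by linear_combination a * hdn
    rw [h4] at h3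
    exact le_antisymm (neg_nonneg.mp h3) (hmul a (n * n) ha hnn)
  have hcn2 : c * (n * n) = 0 := by
    have h3 : 0 ≤ n * (c * d) := hmul n (c * d) hn0 hcd
    have h4 : n * (c * d) = -(c * (n * n)) := by linear_combination c * hdn
    rw [h4] at h3
    exact le_antisymm (neg_nonneg.mp h3) (hmul c (n * n) hc hnn)
  -- b² * n² = 0
  have ht0 : 0 ≤ b ^ 2 * (n * n) := by
    have := hsq (b * n)
    have he : (b * n) * (b * n) = b ^ 2 * (n * n) := by ring
    rwa [he] at this
  have htz : b ^ 2 * (n * n) = 0 := by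
    have h7 : 0 ≤ (n * n) * (a * 1 * 1 + b * 1 * (-b) + b * (-b) * 1 + c * (-b) * (-b)) :=
      hmul _ _ hnn (hQ 1 (-b))
    have he : (n * n) * (a * 1 * 1 + b * 1 * (-b) + b * (-b) * 1 + c * (-b) * (-b))
        = -(b ^ 2 * (n * n) + b ^ 2 * (n * n)) := by
      linear_combination han2 + b ^ 2 * hcn2
    rw [he] at h7
    have h8 : b ^ 2 * (n * n) + b ^ 2 * (n * n) ≤ 0 := neg_nonneg.mp h7
    have h9 : b ^ 2 * (n * n) ≤ b ^ 2 * (n * n) + b ^ 2 * (n * n) := by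
      calc b ^ 2 * (n * n) = b ^ 2 * (n * n) + 0 := by ring
        _ ≤ b ^ 2 * (n * n) + b ^ 2 * (n * n) := by
            exact add_le_add_right ht0 _
    exact le_antisymm (le_trans h9 h8) ht0
  -- n³ = 0, hence n = 0
  have hn3 : n * (n * n) = 0 := by
    linear_combination n * hdn - c * han2 + htz
  have hn2 : n * n = 0 := hsemi _ (by linear_combination n * hn3)
  have hnz : n = 0 := hsemi _ hn2
  have : d = p := by rw [← hpsub, hnz, sub_zero]
  calc (0 : X) ≤ p := posPart_nonneg d
    _ = a * c - b ^ 2 := by rw [← this, hd']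
end

section
/- Let X be a Dedekind complete Riesz space with weak unit e, Y a regular Dedekind complete Riesz subspace of X containing e, and x an element of the positive cone of the sup-completion Y^s. Then the finite part x^f and infinite part x^∞ of x (computed in X^s) belong to Y and Y^s respectively. Concretely: if x ∧ ne ∈ Y for all n, then the band component P_{x^∞} e of e lies in Y, x^f = sup_n (x ∧ ne − n·P_{x^∞}e) ∈ Y, and x^∞ = x − x^f ∈ Y^s. -/
private lemma aux_inf_eq {X : Type*} [Lattice X] [AddCommGroup X]
    [CovariantClass X X (· + ·) (· ≤ ·)] (a b : X) : a ⊓ b = a + b - (a ⊔ b) := by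
  have h1 : a + b + -(a ⊔ b) = (a + b + -a) ⊓ (a + b + -b) := by
    rw [neg_sup, add_inf]
  have h2 : a + b + -a = b := by abel
  have h3 : a + b + -b = a := by abel
  rw [sub_eq_add_neg, h1, h2, h3, inf_comm]

private lemma aux_arch {X : Type*} [ConditionallyCompleteLattice X] [AddCommGroup X]
    [CovariantClass X X (· + ·) (· ≤ ·)] (q f : X) (hq : 0 ≤ q)
    (h : ∀ n : ℕ, n • q ≤ f) : q = 0 := by
  have hne : (Set.range fun n : ℕ => n • q).Nonempty := ⟨0 • q, 0, rfl⟩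
  have hbdd : BddAbove (Set.range fun n : ℕ => n • q) :=
    ⟨f, by rintro _ ⟨n, rfl⟩; exact h n⟩
  have hlub := isLUB_csSup hne hbdd
  have hub : sSup (Set.range fun n : ℕ => n • q)
      ≤ sSup (Set.range fun n : ℕ => n • q) - q := by
    apply hlub.2
    rintro _ ⟨n, rfl⟩
    have h1 : (n + 1) • q ≤ sSup (Set.range fun n : ℕ => n • q) := hlub.1 ⟨n + 1, rfl⟩
    rw [succ_nsmul] at h1
    exact le_sub_iff_add_le.mpr h1
  have h2 : q ≤ 0 := (add_le_iff_nonpos_right _).mp (le_sub_iff_add_le.mp hub)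
  exact le_antisymm h2 hq

/-- Finite and infinite parts of an element of `Y^s` lie in `Y` (resp. `Y^s`),
for a regular Dedekind complete Riesz subspace `Y` of a Dedekind complete
Riesz space `X` with weak order unit `e ∈ Y`.  Concretely, an element
`x ∈ Y^s₊` with decomposition `x = x^f + x^∞` is represented by the data:
a component `p` of `e` (the component of `e` in the band of `x^∞`, so that
`x^∞ ⊓ n e = n p`), the finite part `f = x^f` (positive and disjoint from `p`),
and the sequence `c n = x ⊓ n e = f ⊓ n e + n p`.  If all `c n ∈ Y`, then
`p ∈ Y` (so `x^∞ ∈ Y^s`) and `f = x^f ∈ Y`. -/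
theorem finite_infinite_parts_in_regular_subspace {X : Type*}
    [ConditionallyCompleteLattice X] [AddCommGroup X]
    [CovariantClass X X (· + ·) (· ≤ ·)]
    (e : X) (he : 0 ≤ e)
    -- `e` is a weak order unit
    (hweak : ∀ x : X, 0 ≤ x → x ⊓ e = 0 → x = 0)
    (Y : AddSubgroup X) (heY : e ∈ Y)
    -- `Y` is a sublattice
    (hYinf : ∀ a b : X, a ∈ Y → b ∈ Y → a ⊓ b ∈ Y)
    (hYsup : ∀ a b : X, a ∈ Y → b ∈ Y → a ⊔ b ∈ Y)
    -- `Y` is regular and Dedekind complete: order limits (suprema of monotone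
    -- sequences, computed in `X`) of elements of `Y` belong to `Y`
    (hYreg : ∀ (s : ℕ → X) (b : X), (∀ n, s n ∈ Y) → Monotone s →
      IsLUB (Set.range s) b → b ∈ Y)
    (p f : X) (hp0 : 0 ≤ p) (hpe : p ≤ e) (hpcomp : p ⊓ (e - p) = 0)
    (hf : 0 ≤ f) (hfp : f ⊓ p = 0)
    (c : ℕ → X) (hc : ∀ n : ℕ, c n = f ⊓ (n • e) + n • p)
    (hcY : ∀ n, c n ∈ Y) :
    p ∈ Y ∧ f ∈ Y := by
  set g : ℕ → X := fun n => f ⊓ (n • e) with hg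
  have hstep : ∀ n : ℕ, g n ≤ g (n + 1) := by
    intro n
    simp only [hg]
    refine inf_le_inf_left f ?_
    rw [succ_nsmul]
    exact le_add_of_nonneg_right he
  have hgmono : Monotone g := monotone_nat_of_le_succ hstep
  have hg0 : g 0 = 0 := by
    simp only [hg]
    rw [zero_nsmul]
    exact inf_eq_right.mpr hf
  have hgle : ∀ n, g n ≤ f := fun n => inf_le_left
  -- concavity of n ↦ g n
  have hconc : ∀ n : ℕ, g (n + 2) + g n ≤ g (n + 1) + g (n + 1) := by
    intro n
    have hmb : (n + 1) • e ≤ (n + 2) • e := by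
      rw [succ_nsmul e (n + 1)]
      exact le_add_of_nonneg_right he
    have hmm : (n + 1) • e + (n + 1) • e = (n + 2) • e + n • e := by
      rw [← add_nsmul, ← add_nsmul]
      congr 1
      omega
    have hsup : (f ⊔ (n + 1) • e) + (f ⊔ (n + 1) • e)
        ≤ (f ⊔ (n + 2) • e) + (f ⊔ n • e) := by
      have hexp : (f ⊔ (n + 1) • e) + (f ⊔ (n + 1) • e)
          = ((f + f) ⊔ (f + (n + 1) • e)) ⊔ (((n + 1) • e + f) ⊔ ((n + 1) • e + (n + 1) • e)) := by
        rw [sup_add, add_sup, add_sup]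
      rw [hexp]
      refine sup_le (sup_le ?_ ?_) (sup_le ?_ ?_)
      · exact add_le_add le_sup_left le_sup_left
      · rw [add_comm]
        exact add_le_add (hmb.trans le_sup_right) le_sup_left
      · exact add_le_add (hmb.trans le_sup_right) le_sup_left
      · exact hmm.le.trans (add_le_add le_sup_right le_sup_right)
    have hC : f + (n + 1) • e + (f + (n + 1) • e) = f + (n + 2) • e + (f + n • e) := by
      rw [add_add_add_comm, hmm]
      abel
    have e1 : g (n + 2) + g n
        = (f + (n + 2) • e + (f + n • e)) - ((f ⊔ (n + 2) • e) + (f ⊔ n • e)) := by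
      simp only [hg]
      rw [aux_inf_eq f ((n + 2) • e), aux_inf_eq f (n • e)]
      abel
    have e2 : g (n + 1) + g (n + 1)
        = (f + (n + 2) • e + (f + n • e)) - ((f ⊔ (n + 1) • e) + (f ⊔ (n + 1) • e)) := by
      simp only [hg]
      rw [aux_inf_eq f ((n + 1) • e), ← hC]
      abel
    rw [e1, e2]
    exact sub_le_sub_left hsup _
  have harch : ∀ q : X, 0 ≤ q → (∀ n : ℕ, n • q ≤ f) → q = 0 := fun q hq h =>
    aux_arch q f hq h
  -- the difference sequence
  have hd : ∀ n : ℕ, c (n + 1) - c n = g (n + 1) - g n + p := by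
    intro n
    rw [hc, hc, succ_nsmul p n]
    simp only [hg]
    abel
  have hdantitone : Antitone fun n : ℕ => c (n + 1) - c n := by
    refine antitone_nat_of_succ_le fun n => ?_
    rw [hd, hd]
    refine add_le_add_left ?_ p
    rw [sub_le_sub_iff]
    exact hconc n
  have hdglb : IsGLB (Set.range fun n : ℕ => c (n + 1) - c n) p := by
    constructor
    · rintro _ ⟨n, rfl⟩
      dsimp only
      rw [hd]
      exact le_add_of_nonneg_left (sub_nonneg.mpr (hstep n))
    · intro b hb
      have hbn : ∀ n : ℕ, b - p ≤ g (n + 1) - g n := by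
        intro n
        have h1 : b ≤ c (n + 1) - c n := hb ⟨n, rfl⟩
        rw [hd] at h1
        exact sub_le_iff_le_add.mpr h1
      set q : X := (b - p) ⊔ 0 with hqdef
      have hq0 : 0 ≤ q := le_sup_right
      have hqle : ∀ n : ℕ, q ≤ g (n + 1) - g n := fun n =>
        sup_le (hbn n) (sub_nonneg.mpr (hstep n))
      have hnq : ∀ n : ℕ, n • q ≤ g n := by
        intro n
        induction n with
        | zero => rw [zero_nsmul, hg0]
        | succ n ih =>
          rw [succ_nsmul]
          calc n • q + q ≤ g n + (g (n + 1) - g n) := add_le_add ih (hqle n)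
            _ = g (n + 1) := by abel
      have hq : q = 0 := harch q hq0 fun n => (hnq n).trans (hgle n)
      have hbp : b - p ≤ 0 := by
        have := le_sup_left (a := b - p) (b := (0 : X))
        rw [← hqdef, hq] at this
        exact this
      exact sub_nonpos.mp hbp
  -- p ∈ Y
  have hpY : p ∈ Y := by
    have hnegY : p ∈ Y ↔ -p ∈ Y := ⟨fun h => neg_mem h, fun h => by simpa using neg_mem h⟩
    refine hnegY.mpr (hYreg (fun n : ℕ => c n - c (n + 1)) (-p) ?_ ?_ ?_)
    · exact fun n => sub_mem (hcY n) (hcY (n + 1))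
    · intro m n hmn
      dsimp only
      rw [← neg_sub (c (m + 1)) (c m), ← neg_sub (c (n + 1)) (c n)]
      exact neg_le_neg_iff.mpr (hdantitone hmn)
    · constructor
      · rintro _ ⟨n, rfl⟩
        dsimp only
        rw [← neg_sub (c (n + 1)) (c n)]
        exact neg_le_neg_iff.mpr (hdglb.1 ⟨n, rfl⟩)
      · intro b hb
        have hlb : -b ∈ lowerBounds (Set.range fun n : ℕ => c (n + 1) - c n) := by
          rintro _ ⟨n, rfl⟩
          have h1 : c n - c (n + 1) ≤ b := hb ⟨n, rfl⟩
          dsimp only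
          rw [neg_le, neg_sub]
          exact h1
        exact neg_le.mp (hdglb.2 hlb)
  -- f ∈ Y
  have hgc : ∀ n : ℕ, c n - n • p = g n := by
    intro n
    rw [hc]
    simp only [hg]
    abel
  have hfY : f ∈ Y := by
    refine hYreg (fun n : ℕ => c n - n • p) f ?_ ?_ ?_
    · exact fun n => sub_mem (hcY n) (AddSubgroup.nsmul_mem Y hpY n)
    · intro m n hmn
      dsimp only
      rw [hgc, hgc]
      exact hgmono hmn
    · constructor
      · rintro _ ⟨n, rfl⟩
        dsimp only
        rw [hgc]
        exact hgle n
      · intro b hb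
        have hgb : ∀ n : ℕ, g n ≤ b := by
          intro n
          have h1 : c n - n • p ≤ b := hb ⟨n, rfl⟩
          rwa [hgc] at h1
        set w : X := f - f ⊓ b with hw
        have hw0 : 0 ≤ w := sub_nonneg.mpr inf_le_left
        set v : X := w ⊓ e with hv
        have hv0 : 0 ≤ v := le_inf hw0 he
        have hwn : ∀ n : ℕ, w ≤ f - g n := fun n =>
          sub_le_sub_left (le_inf (hgle n) (hgb n)) f
        have hnv : ∀ n : ℕ, n • v ≤ g n := by
          intro n
          induction n with
          | zero => rw [zero_nsmul, hg0]
          | succ n ih =>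
            have hvf : g n + v ≤ f := by
              have h1 : v ≤ f - g n := inf_le_left.trans (hwn n)
              calc g n + v ≤ g n + (f - g n) := add_le_add_right h1 _
                _ = f := by abel
            have hve : g n + v ≤ (n + 1) • e := by
              rw [succ_nsmul]
              exact add_le_add inf_le_right inf_le_right
            have h2 : g n + v ≤ g (n + 1) := by
              simp only [hg]
              exact le_inf hvf hve
            rw [succ_nsmul]
            exact (add_le_add_left ih v).trans h2
        have hvz : v = 0 := harch v hv0 fun n => (hnv n).trans (hgle n)
        have hwz : w = 0 := hweak w hw0 hvz
        have hfb : f = f ⊓ b := sub_eq_zero.mp hwz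
        calc f = f ⊓ b := hfb
          _ ≤ b := inf_le_right
  exact ⟨hpY, hfY⟩
end
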